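/- Let n > α > 0 and u : ℝ^n → (0,∞) be a C¹ function. Fix z ∈ ℝ^n and suppose that for every y ∈ ℝ^n, y ≠ z, the function h(t) = t^{−(n−α)} u((z−y)/t + y) − u(t(z−y) + y) satisfies h(1) = 0 and h(t) ≤ 0 for all t > 1. Then for every y ≠ z, −(n−α) u(z) − 2⟨∇u(z), z−y⟩ ≤ 0; consequently, for every unit vector ν, ⟨∇u(z), ν⟩ ≥ 0, and hence ∇u(z) = 0. -/

import Mathlib

/-!
Along the ray `t ↦ y + t (z - y)`, `h(t) = t ^ c u(y + (z - y)/t) - u(y + t (z - y))` vanishes at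
`t = 1` and is nonpositive for `t > 1`, so `h'(1) = c u(z) - 2 ⟪∇u(z), z - y⟫ ≤ 0`. Taking
`y = z - R w` with `R → ∞` makes the term `c u(z)` negligible, hence `⟪∇u(z), w⟫ ≥ 0` for every `w`,
and `w = -∇u(z)` forces `∇u(z) = 0`.
-/

open RealInnerProductSpace Set

lemma HasDerivAt.nonpos_of_forall_gt_le {f : ℝ → ℝ} {f' a : ℝ} (hf : HasDerivAt f f' a)
    (h : ∀ t, a < t → f t ≤ f a) : f' ≤ 0 := by
  have hmax : IsLocalMaxOn f (Ici a) a :=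
    Filter.mem_of_superset self_mem_nhdsWithin fun t ht ↦
      (eq_or_lt_of_le (mem_Ici.1 ht)).elim (fun hat ↦ hat ▸ le_refl (f a)) (h t)
  simpa using hmax.hasFDerivWithinAt_nonpos hf.hasFDerivAt.hasFDerivWithinAt (y := 1)
    (mem_posTangentConeAt_of_segment_subset (by simp [segment_eq_Icc, Icc_subset_Ici_self]))

lemma nonneg_of_forall_pos_le_mul {a b : ℝ} (h : ∀ R > 0, a ≤ R * b) : 0 ≤ b := by
  by_contra! hb
  have hR : 0 < (|a| + 1) / -b := div_pos (by positivity) (neg_pos.2 hb)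
  have := h _ hR
  rw [div_mul_eq_mul_div, div_neg, mul_div_cancel_right₀ _ hb.ne] at this
  linarith [neg_abs_le a]

variable {E : Type*} [NormedAddCommGroup E] [InnerProductSpace ℝ E] {g v y z : E}

lemma inner_nonneg_of_forall_le_inner_sub {a : ℝ} (h : ∀ y, y ≠ z → a ≤ ⟪g, z - y⟫) (w : E) :
    0 ≤ ⟪g, w⟫ := by
  rcases eq_or_ne w 0 with rfl | hw
  · simp
  refine nonneg_of_forall_pos_le_mul (a := a) fun R hR ↦ ?_
  have hne : z - R • w ≠ z := by simp [hR.ne', hw]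
  simpa [real_inner_smul_right] using h _ hne

variable [CompleteSpace E] {u : E → ℝ}

lemma HasGradientAt.hasDerivAt_comp_smul_add {t₀ : ℝ} (hu : HasGradientAt u g (t₀ • v + y)) :
    HasDerivAt (fun t : ℝ ↦ u (t • v + y)) ⟪g, v⟫ t₀ := by
  simpa [Function.comp_def] using
    hu.hasFDerivAt.comp_hasDerivAt t₀ (((hasDerivAt_id t₀).smul_const v).add_const y)

lemma HasGradientAt.hasDerivAt_comp_inv_smul_add (hu : HasGradientAt u g (v + y)) :
    HasDerivAt (fun t : ℝ ↦ u (t⁻¹ • v + y)) (-⟪g, v⟫) 1 := by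
  have hinv : HasDerivAt (fun t : ℝ ↦ t⁻¹ • v + y) (-v) 1 := by
    simpa using ((hasDerivAt_inv (one_ne_zero' ℝ)).smul_const v).add_const y
  rw [← one_smul ℝ v, ← inv_one] at hu
  simpa [Function.comp_def, inner_neg_right] using hu.hasFDerivAt.comp_hasDerivAt 1 hinv

lemma hasDerivAt_rpow_mul_comp_inv_smul_add_sub_comp_smul_add (c : ℝ)
    (hu : HasGradientAt u g (v + y)) :
    HasDerivAt (fun t : ℝ ↦ t ^ c * u (t⁻¹ • v + y) - u (t • v + y))
      (c * u (v + y) - 2 * ⟪g, v⟫) 1 := by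
  have hpow : HasDerivAt (fun t : ℝ ↦ t ^ c) c 1 := by
    simpa using Real.hasDerivAt_rpow_const (x := 1) (p := c) (Or.inl one_ne_zero)
  have hu₁ : HasGradientAt u g ((1 : ℝ) • v + y) := by rwa [one_smul]
  refine ((hpow.mul hu.hasDerivAt_comp_inv_smul_add).sub
    hu₁.hasDerivAt_comp_smul_add).congr_deriv ?_
  simp only [inv_one, one_smul, Real.one_rpow]
  ring

/-- With `c = -(n - α)`, `t ^ c * u (t⁻¹ • (z - y) + y)` is the Kelvin transform of `u` with
respect to the sphere centred at `y` through `z`, evaluated at `t • (z - y) + y`. -/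
lemma inner_gradient_le_of_kelvin (hu : DifferentiableAt ℝ u z) (c : ℝ)
    (h : ∀ t : ℝ, 1 < t → t ^ c * u (t⁻¹ • (z - y) + y) - u (t • (z - y) + y) ≤ 0) :
    c * u z - 2 * ⟪gradient u z, z - y⟫ ≤ 0 := by
  have hzy : z - y + y = z := sub_add_cancel z y
  have hu' : HasGradientAt u (gradient u z) (z - y + y) := by rw [hzy]; exact hu.hasGradientAt
  have hd := hasDerivAt_rpow_mul_comp_inv_smul_add_sub_comp_smul_add c hu'
  rw [hzy] at hd
  refine hd.nonpos_of_forall_gt_le fun t ht ↦ ?_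
  simpa [hzy] using h t ht

theorem stmt_8_general (n : ℕ) (α : ℝ)
    (u : EuclideanSpace ℝ (Fin n) → ℝ)
    (hC1 : ContDiff ℝ 1 u) (z : EuclideanSpace ℝ (Fin n))
    (hh : ∀ y : EuclideanSpace ℝ (Fin n), y ≠ z → ∀ t : ℝ, 1 < t →
      t ^ (-((n:ℝ) - α)) * u (t⁻¹ • (z - y) + y) - u (t • (z - y) + y) ≤ 0) :
    (∀ y : EuclideanSpace ℝ (Fin n), y ≠ z →
      -((n:ℝ) - α) * u z - 2 * ⟪gradient u z, z - y⟫ ≤ 0) ∧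
    (∀ ν : EuclideanSpace ℝ (Fin n), ‖ν‖ = 1 → 0 ≤ ⟪gradient u z, ν⟫) ∧
    gradient u z = 0 := by
  have hdiff : DifferentiableAt ℝ u z := hC1.differentiable one_ne_zero z
  have hfirst : ∀ y, y ≠ z → -((n:ℝ) - α) * u z - 2 * ⟪gradient u z, z - y⟫ ≤ 0 :=
    fun y hy ↦ inner_gradient_le_of_kelvin hdiff _ (hh y hy)
  have hnonneg : ∀ w, 0 ≤ ⟪gradient u z, w⟫ :=
    inner_nonneg_of_forall_le_inner_sub (a := -((n:ℝ) - α) * u z / 2) fun y hy ↦ by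
      linarith [hfirst y hy]
  refine ⟨hfirst, fun ν _ ↦ hnonneg ν, ?_⟩
  simpa [inner_neg_right] using hnonneg (-gradient u z)

theorem stmt_8 (n : ℕ) (hn : 1 ≤ n) (α : ℝ) (hα0 : 0 < α) (hnα : α < (n : ℝ))
    (u : EuclideanSpace ℝ (Fin n) → ℝ) (hu : ∀ x, 0 < u x)
    (hC1 : ContDiff ℝ 1 u) (z : EuclideanSpace ℝ (Fin n))
    (hh : ∀ y : EuclideanSpace ℝ (Fin n), y ≠ z → ∀ t : ℝ, 1 < t →
      t ^ (-((n:ℝ) - α)) * u (t⁻¹ • (z - y) + y) - u (t • (z - y) + y) ≤ 0) :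
    (∀ y : EuclideanSpace ℝ (Fin n), y ≠ z →
      -((n:ℝ) - α) * u z - 2 * ⟪gradient u z, z - y⟫ ≤ 0) ∧
    (∀ ν : EuclideanSpace ℝ (Fin n), ‖ν‖ = 1 → 0 ≤ ⟪gradient u z, ν⟫) ∧
    gradient u z = 0 :=
  stmt_8_general n α u hC1 z hh
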